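/- Call a component non-factorizable if it is not equal to a product of two components of positive degree. Then the set of non-factorizable components of Comp(G,ξ) is finite, and every component is a product of finitely many non-factorizable components; in particular the monoid Comp(G,ξ) is finitely generated. -/

import Mathlib

open scoped Classical

/-- One Hurwitz braid move: replace adjacent entries `a, b` by `a*b*a⁻¹, a`. -/
inductive BraidMove (G : Type*) [Group G] : List G → List G → Prop
  | mk (l₁ l₂ : List G) (a b : G) :
      BraidMove G (l₁ ++ a :: b :: l₂) (l₁ ++ (a * b * a⁻¹) :: a :: l₂)

/-- Braid equivalence of tuples: the equivalence relation generated by Hurwitz moves. -/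
def BraidEquiv (G : Type*) [Group G] : List G → List G → Prop :=
  Relation.EqvGen (BraidMove G)

theorem BraidMove.append_right {G : Type*} [Group G] {l l' : List G} (m : List G)
    (h : BraidMove G l l') : BraidMove G (l ++ m) (l' ++ m) := by
  cases h with
  | mk l₁ l₂ a b =>
    simpa only [List.append_assoc, List.cons_append] using BraidMove.mk (G := G) l₁ (l₂ ++ m) a b

theorem BraidMove.append_left {G : Type*} [Group G] {l l' : List G} (m : List G)
    (h : BraidMove G l l') : BraidMove G (m ++ l) (m ++ l') := by
  cases h with
  | mk l₁ l₂ a b =>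
    simpa only [← List.append_assoc] using BraidMove.mk (G := G) (m ++ l₁) l₂ a b

theorem BraidEquiv.append_right {G : Type*} [Group G] {l l' : List G} (m : List G)
    (h : BraidEquiv G l l') : BraidEquiv G (l ++ m) (l' ++ m) := by
  induction h with
  | rel x y hxy => exact Relation.EqvGen.rel _ _ (hxy.append_right m)
  | refl x => exact Relation.EqvGen.refl _
  | symm x y _ ih => exact Relation.EqvGen.symm _ _ ih
  | trans x y z _ _ ih₁ ih₂ => exact Relation.EqvGen.trans _ _ _ ih₁ ih₂

theorem BraidEquiv.append_left {G : Type*} [Group G] {l l' : List G} (m : List G)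
    (h : BraidEquiv G l l') : BraidEquiv G (m ++ l) (m ++ l') := by
  induction h with
  | rel x y hxy => exact Relation.EqvGen.rel _ _ (hxy.append_left m)
  | refl x => exact Relation.EqvGen.refl _
  | symm x y _ ih => exact Relation.EqvGen.symm _ _ ih
  | trans x y z _ _ ih₁ ih₂ => exact Relation.EqvGen.trans _ _ _ ih₁ ih₂

theorem BraidEquiv.append {G : Type*} [Group G] {a b c d : List G}
    (h₁ : BraidEquiv G a b) (h₂ : BraidEquiv G c d) : BraidEquiv G (a ++ c) (b ++ d) :=
  Relation.EqvGen.trans _ _ _ (h₁.append_right c) (h₂.append_left b)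

/-- The setoid of braid equivalence on tuples of elements of `G`. -/
def braidSetoid (G : Type*) [Group G] : Setoid (List G) :=
  Relation.EqvGen.setoid (BraidMove G)

/-- Braid-equivalence classes of tuples of elements of `G`. -/
def HurwitzCl (G : Type*) [Group G] : Type _ :=
  Quotient (braidSetoid G)

/-- Concatenation endows the set of braid-equivalence classes with a monoid structure,
the class of the empty tuple being the identity. -/
instance (G : Type*) [Group G] : Monoid (HurwitzCl G) where
  mul := Quotient.map₂ (· ++ ·) fun _ _ h₁ _ _ h₂ => BraidEquiv.append h₁ h₂
  one := Quotient.mk (braidSetoid G) []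
  mul_assoc a b c := by
    refine Quotient.inductionOn₃ a b c fun a b c => ?_
    exact congrArg (Quotient.mk _) (List.append_assoc a b c)
  one_mul a := by
    refine Quotient.inductionOn a fun a => ?_
    rfl
  mul_one a := by
    refine Quotient.inductionOn a fun a => ?_
    exact congrArg (Quotient.mk _) (List.append_nil a)

/-- The braid-equivalence class of a tuple. -/
def HurwitzCl.mk {G : Type*} [Group G] (l : List G) : HurwitzCl G :=
  Quotient.mk (braidSetoid G) l

theorem HurwitzCl.mk_mul {G : Type*} [Group G] (l l' : List G) :
    HurwitzCl.mk l * HurwitzCl.mk l' = HurwitzCl.mk (l ++ l') := rfl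

/-- The total weight `|ξ| = ∑_{c ∈ D} ξ(c)`. -/
def totalXi {G : Type*} [Group G] (D : Finset (ConjClasses G)) (ξ : ConjClasses G → ℕ) : ℕ :=
  ∑ c ∈ D, ξ c

/-- `l` is a tuple representing a component of degree `n`: it has product `1`,
length `n·|ξ|`, and exactly `n·ξ(c)` entries in the class `c`, for each `c ∈ D`. -/
def IsComponentList {G : Type*} [Group G] (D : Finset (ConjClasses G))
    (ξ : ConjClasses G → ℕ) (n : ℕ) (l : List G) : Prop :=
  l.prod = 1 ∧ l.length = n * totalXi D ξ ∧
    ∀ c ∈ D, l.countP (fun x => decide (ConjClasses.mk x = c)) = n * ξ c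

/-- The monoid of components `Comp(G,ξ)`, as a submonoid of the monoid of
braid-equivalence classes of tuples under concatenation. -/
def Comp {G : Type*} [Group G] (D : Finset (ConjClasses G)) (ξ : ConjClasses G → ℕ) :
    Submonoid (HurwitzCl G) where
  carrier := {x | ∃ n l, x = HurwitzCl.mk l ∧ IsComponentList D ξ n l}
  one_mem' := ⟨0, [], rfl, by simp [IsComponentList]⟩
  mul_mem' := by
    rintro x y ⟨n, l, rfl, hl1, hl2, hl3⟩ ⟨n', l', rfl, hl1', hl2', hl3'⟩
    refine ⟨n + n', l ++ l', rfl, ?_, ?_, ?_⟩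
    · simp [List.prod_append, hl1, hl1']
    · simp [hl2, hl2', add_mul]
    · intro c hc
      simp [List.countP_append, hl3 c hc, hl3' c hc, add_mul]

/-- A component is non-factorizable if it is not a product of two components of
positive degree (i.e. two nontrivial components). -/
def NonFactorizable {G : Type*} [Group G] {D : Finset (ConjClasses G)}
    {ξ : ConjClasses G → ℕ} (x : ↥(Comp D ξ)) : Prop :=
  ¬ ∃ y z : ↥(Comp D ξ), y ≠ 1 ∧ z ≠ 1 ∧ x = y * z

/-! Tuple length is a braid invariant, so induction on length writes every component as a product
of non-factorizable ones. For finiteness, take a component of degree `n ≥ |G|²`. By pigeonhole,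
each class `c ∈ D` contains an element `g_c` occurring at least `|G| ξ(c)` times. Hurwitz moves
bring these copies to the front (moving `g` leftwards past an entry only conjugates that entry),
and the block `∏ g_c ^ (|G| ξ(c)) = 1` is a component of degree `|G|`. Hence every component of
degree `> |G|²` factors, and non-factorizable components are classes of tuples of bounded length. -/
open List

section Braid

variable {G : Type*} [Group G]

theorem BraidEquiv.refl (l : List G) : BraidEquiv G l l := Relation.EqvGen.refl l

theorem BraidMove.braidEquiv {l l' : List G} (h : BraidMove G l l') : BraidEquiv G l l' :=
  Relation.EqvGen.rel _ _ h

theorem BraidEquiv.symm {l l' : List G} (h : BraidEquiv G l l') : BraidEquiv G l' l :=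
  Relation.EqvGen.symm _ _ h

theorem BraidEquiv.trans {l₁ l₂ l₃ : List G} (h₁ : BraidEquiv G l₁ l₂)
    (h₂ : BraidEquiv G l₂ l₃) : BraidEquiv G l₁ l₃ :=
  Relation.EqvGen.trans _ _ _ h₁ h₂

theorem BraidEquiv.eq_of_braidMove {α : Type*} {f : List G → α}
    (hf : ∀ l l', BraidMove G l l' → f l = f l') {l l' : List G} (h : BraidEquiv G l l') :
    f l = f l' :=
  Setoid.eqvGen_le (s := Setoid.ker f) hf h

-- The predicate exactly as `IsComponentList` elaborates it: under `[Fintype G]` instance search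
-- finds a different `DecidableEq (ConjClasses G)`.
noncomputable def classCount (c : ConjClasses G) (l : List G) : ℕ :=
  l.countP fun x => decide (ConjClasses.mk x = c)

theorem classCount_append (c : ConjClasses G) (l l' : List G) :
    classCount c (l ++ l') = classCount c l + classCount c l' :=
  countP_append

theorem classCount_replicate (c : ConjClasses G) (g : G) (k : ℕ) :
    classCount c (replicate k g) = if ConjClasses.mk g = c then k else 0 := by
  simp [classCount, countP_replicate]

theorem BraidMove.prod_eq {l l' : List G} (h : BraidMove G l l') : l.prod = l'.prod := by
  cases h; simp [mul_assoc]

theorem BraidMove.length_eq {l l' : List G} (h : BraidMove G l l') : l.length = l'.length := by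
  cases h; simp

theorem BraidMove.classCount_eq (c : ConjClasses G) {l l' : List G} (h : BraidMove G l l') :
    classCount c l = classCount c l' := by
  cases h with
  | mk l₁ l₂ a b =>
    have hconj : ConjClasses.mk (a * b * a⁻¹) = ConjClasses.mk b :=
      ConjClasses.mk_eq_mk_iff_isConj.2 (isConj_iff.2 ⟨a, rfl⟩).symm
    simp only [classCount, countP_append, countP_cons, hconj]
    ring

theorem BraidEquiv.prod_eq {l l' : List G} (h : BraidEquiv G l l') : l.prod = l'.prod :=
  h.eq_of_braidMove fun _ _ => BraidMove.prod_eq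

theorem BraidEquiv.length_eq {l l' : List G} (h : BraidEquiv G l l') :
    l.length = l'.length :=
  h.eq_of_braidMove fun _ _ => BraidMove.length_eq

theorem BraidEquiv.classCount_eq (c : ConjClasses G) {l l' : List G}
    (h : BraidEquiv G l l') : classCount c l = classCount c l' :=
  h.eq_of_braidMove fun _ _ => BraidMove.classCount_eq c

theorem exists_braidEquiv_cons_replicate (a g : G) (m : ℕ) :
    ∃ a', BraidEquiv G (a :: replicate m g) (replicate m g ++ [a']) := by
  induction m generalizing a with
  | zero => exact ⟨a, BraidEquiv.refl _⟩
  | succ m ih =>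
    obtain ⟨a', h⟩ := ih (g⁻¹ * a * g)
    have hswap : BraidMove G (g :: (g⁻¹ * a * g) :: replicate m g) (a :: g :: replicate m g) := by
      simpa [mul_assoc] using BraidMove.mk (G := G) [] (replicate m g) g (g⁻¹ * a * g)
    exact ⟨a', hswap.braidEquiv.symm.trans (h.append_left [g])⟩

theorem exists_braidEquiv_replicate_count_append [DecidableEq G] (g : G) (l : List G) :
    ∃ l', BraidEquiv G l (replicate (l.count g) g ++ l') := by
  induction l with
  | nil => exact ⟨[], BraidEquiv.refl _⟩
  | cons a t ih =>
    obtain ⟨t', ht⟩ := ih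
    have hcons : BraidEquiv G (a :: t) (a :: (replicate (t.count g) g ++ t')) :=
      ht.append_left [a]
    by_cases hag : a = g
    · subst hag
      exact ⟨t', by simpa [count_cons_self, replicate_succ] using hcons⟩
    · obtain ⟨a', ha'⟩ := exists_braidEquiv_cons_replicate a g (t.count g)
      refine ⟨a' :: t', ?_⟩
      rw [count_cons_of_ne hag]
      simpa using hcons.trans (ha'.append_right t')

theorem exists_braidEquiv_replicate_append [DecidableEq G] {g : G} {k : ℕ} {l : List G}
    (hk : k ≤ l.count g) : ∃ l', BraidEquiv G l (replicate k g ++ l') := by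
  obtain ⟨l', h⟩ := exists_braidEquiv_replicate_count_append g l
  rw [← Nat.add_sub_cancel' hk, replicate_add, append_assoc] at h
  exact ⟨_, h⟩

end Braid

theorem List.exists_le_count_of_card_mul_le_countP {α : Type*} [Fintype α] [DecidableEq α]
    {p : α → Bool} (hp : ∃ a, p a) (l : List α) {k : ℕ}
    (h : Fintype.card α * k ≤ l.countP p) : ∃ a, p a ∧ k ≤ l.count a := by
  set s := Finset.univ.filter fun a => p a
  have hs : s.Nonempty := let ⟨a, ha⟩ := hp; ⟨a, by simp [s, ha]⟩
  have hsum : ∑ a ∈ s, l.count a = l.countP p := by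
    have := Finset.sum_filter_count_eq_countP (fun a => p a) l
    simp only [Bool.decide_eq_true] at this
    rw [← this]
    refine (Finset.sum_subset (fun a ha => ?_) fun a _ ha => ?_).symm
    · simp_all [s]
    · simp_all [s, count_eq_zero]
  obtain ⟨a, ha, hk⟩ := Finset.exists_le_of_sum_le hs (f := fun _ => k) (g := (l.count ·)) (by
    rw [Finset.sum_const, hsum, smul_eq_mul]
    exact (Nat.mul_le_mul_right k (Finset.card_le_univ s)).trans h)
  exact ⟨a, by simpa [s] using ha, hk⟩

section Extraction

variable {G : Type*} [Group G] [Fintype G]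

theorem exists_le_count_of_card_mul_le_classCount {c : ConjClasses G} {l : List G} {k : ℕ}
    (h : Fintype.card G * k ≤ classCount c l) : ∃ g, ConjClasses.mk g = c ∧ k ≤ l.count g := by
  obtain ⟨g₀, hg₀⟩ := c.exists_rep
  obtain ⟨g, hg, hk⟩ := List.exists_le_count_of_card_mul_le_countP ⟨g₀, by simp [hg₀]⟩ l h
  exact ⟨g, by simpa using hg, hk⟩

theorem exists_braidEquiv_append_of_classCount_ge (m : ConjClasses G → ℕ)
    (s : Finset (ConjClasses G)) (l : List G)
    (hl : ∀ c ∈ s, Fintype.card G * (Fintype.card G * m c) ≤ classCount c l) :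
    ∃ P B, BraidEquiv G l (P ++ B) ∧ P.prod = 1 ∧
      P.length = ∑ c ∈ s, Fintype.card G * m c ∧
      ∀ c, classCount c P = if c ∈ s then Fintype.card G * m c else 0 := by
  induction s using Finset.induction_on generalizing l with
  | empty => exact ⟨[], l, BraidEquiv.refl l, rfl, rfl, fun c => by simp [classCount]⟩
  | insert c s hc ih =>
    obtain ⟨g, rfl, hg⟩ := exists_le_count_of_card_mul_le_classCount (hl _ (s.mem_insert_self _))
    obtain ⟨l₁, hl₁⟩ := exists_braidEquiv_replicate_append hg
    have hl₁s : ∀ d ∈ s, Fintype.card G * (Fintype.card G * m d) ≤ classCount d l₁ := by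
      intro d hd
      have hgd : ConjClasses.mk g ≠ d := fun h => hc (h ▸ hd)
      have := hl d (Finset.mem_insert_of_mem hd)
      rwa [hl₁.classCount_eq, classCount_append, classCount_replicate, if_neg hgd,
        zero_add] at this
    obtain ⟨P, B, hPB, hP, hPlen, hPcount⟩ := ih l₁ hl₁s
    refine ⟨replicate (Fintype.card G * m (ConjClasses.mk g)) g ++ P, B, ?_, ?_, ?_, ?_⟩
    · simpa using hl₁.trans (hPB.append_left _)
    · rw [prod_append, prod_replicate, pow_mul, pow_card_eq_one, one_pow, hP, one_mul]
    · rw [length_append, length_replicate, hPlen, Finset.sum_insert hc]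
    · intro d
      rw [classCount_append, classCount_replicate, hPcount]
      by_cases hgd : ConjClasses.mk g = d
      · subst hgd; simp [hc]
      · simp [hgd, Ne.symm hgd]

end Extraction

namespace HurwitzCl

variable {G : Type*} [Group G]

def length : HurwitzCl G → ℕ :=
  Quotient.lift List.length fun _ _ => BraidEquiv.length_eq

theorem length_mk (l : List G) : (mk l).length = l.length := rfl

theorem length_mul (x y : HurwitzCl G) : (x * y).length = x.length + y.length :=
  Quotient.inductionOn₂ x y fun _ _ => length_append

theorem length_eq_zero {x : HurwitzCl G} : x.length = 0 ↔ x = 1 := by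
  induction x using Quotient.inductionOn with
  | h l =>
    refine ⟨fun h => ?_, fun h => h ▸ rfl⟩
    rw [eq_nil_of_length_eq_zero h]
    rfl

end HurwitzCl

section Components

variable {G : Type*} [Group G] {D : Finset (ConjClasses G)} {ξ : ConjClasses G → ℕ}

theorem IsComponentList.classCount_eq {n : ℕ} {l : List G} (hl : IsComponentList D ξ n l)
    {c : ConjClasses G} (hc : c ∈ D) : classCount c l = n * ξ c :=
  hl.2.2 c hc

theorem IsComponentList.of_braidEquiv {n : ℕ} {l l' : List G} (hl : IsComponentList D ξ n l)
    (h : BraidEquiv G l l') : IsComponentList D ξ n l' :=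
  ⟨h.prod_eq.symm.trans hl.1, h.length_eq.symm.trans hl.2.1,
    fun c hc => (h.classCount_eq c).symm.trans (hl.classCount_eq hc)⟩

theorem IsComponentList.of_append_left {m n : ℕ} {P B : List G}
    (h : IsComponentList D ξ n (P ++ B)) (hP : IsComponentList D ξ m P) :
    IsComponentList D ξ (n - m) B := by
  obtain ⟨hprod, hlen, hcount⟩ := h
  refine ⟨by rwa [prod_append, hP.1, one_mul] at hprod, ?_, fun c hc => ?_⟩
  · rw [length_append, hP.2.1] at hlen
    rw [Nat.sub_mul]
    omega
  · have := hcount c hc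
    rw [← classCount, classCount_append, hP.classCount_eq hc] at this
    rw [← classCount, Nat.sub_mul]
    omega

def IsComponentList.toComp {n : ℕ} {l : List G} (hl : IsComponentList D ξ n l) : Comp D ξ :=
  ⟨HurwitzCl.mk l, n, l, rfl, hl⟩

theorem Comp.length_pos_iff_ne_one {x : Comp D ξ} : 0 < (x : HurwitzCl G).length ↔ x ≠ 1 :=
  Nat.pos_iff_ne_zero.trans (HurwitzCl.length_eq_zero.trans OneMemClass.coe_eq_one).not

theorem Comp.exists_list_nonFactorizable_prod (x : Comp D ξ) :
    ∃ L : List (Comp D ξ), (∀ y ∈ L, NonFactorizable y) ∧ x = L.prod := by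
  induction hn : (x : HurwitzCl G).length using Nat.strong_induction_on generalizing x with
  | _ n ih =>
    by_cases hx : NonFactorizable x
    · exact ⟨[x], by simpa using hx, by simp⟩
    obtain ⟨y, z, hy, hz, rfl⟩ := not_not.1 hx
    have hlen : (y : HurwitzCl G).length + (z : HurwitzCl G).length = n :=
      (HurwitzCl.length_mul _ _).symm.trans hn
    have hy' := length_pos_iff_ne_one.2 hy
    have hz' := length_pos_iff_ne_one.2 hz
    obtain ⟨Ly, hLy, rfl⟩ := ih _ (by omega) y rfl
    obtain ⟨Lz, hLz, rfl⟩ := ih _ (by omega) z rfl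
    exact ⟨Ly ++ Lz, fun u hu => (mem_append.1 hu).elim (hLy u) (hLz u), prod_append.symm⟩

theorem Comp.closure_setOf_nonFactorizable :
    Submonoid.closure {x : Comp D ξ | NonFactorizable x} = ⊤ := by
  refine eq_top_iff.2 fun x _ => ?_
  obtain ⟨L, hL, rfl⟩ := exists_list_nonFactorizable_prod x
  exact Submonoid.list_prod_mem _ fun y hy => Submonoid.subset_closure (hL y hy)

variable [Fintype G]

theorem IsComponentList.exists_braidEquiv_append {n : ℕ} {l : List G}
    (hl : IsComponentList D ξ n l) (hn : Fintype.card G * Fintype.card G ≤ n) :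
    ∃ P B, BraidEquiv G l (P ++ B) ∧ IsComponentList D ξ (Fintype.card G) P ∧
      IsComponentList D ξ (n - Fintype.card G) B := by
  obtain ⟨P, B, hPB, hprod, hlen, hcount⟩ :=
    exists_braidEquiv_append_of_classCount_ge ξ D l fun c hc => by
      rw [hl.classCount_eq hc, ← mul_assoc]
      exact Nat.mul_le_mul_right _ hn
  have hP : IsComponentList D ξ (Fintype.card G) P :=
    ⟨hprod, by rw [hlen, totalXi, Finset.mul_sum], fun c hc => (hcount c).trans (if_pos hc)⟩
  exact ⟨P, B, hPB, hP, (hl.of_braidEquiv hPB).of_append_left hP⟩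

theorem NonFactorizable.length_le {x : Comp D ξ} (hx : NonFactorizable x) :
    (x : HurwitzCl G).length ≤ Fintype.card G * Fintype.card G * totalXi D ξ := by
  obtain ⟨n, l, hxl, hl⟩ := x.2
  rw [hxl, HurwitzCl.length_mk, hl.2.1]
  by_contra! hlt
  have hT : 0 < totalXi D ξ := Nat.pos_of_mul_pos_left (Nat.zero_lt_of_lt hlt)
  have hn : Fintype.card G * Fintype.card G < n := Nat.lt_of_mul_lt_mul_right hlt
  have hG : Fintype.card G ≤ Fintype.card G * Fintype.card G := Nat.le_mul_self _
  obtain ⟨P, B, hPB, hP, hB⟩ := hl.exists_braidEquiv_append hn.le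
  refine hx ⟨hP.toComp, hB.toComp, ?_, ?_, Subtype.ext ?_⟩
  · refine Comp.length_pos_iff_ne_one.1 ?_
    rw [IsComponentList.toComp, HurwitzCl.length_mk, hP.2.1]
    exact Nat.mul_pos Fintype.card_pos hT
  · refine Comp.length_pos_iff_ne_one.1 ?_
    rw [IsComponentList.toComp, HurwitzCl.length_mk, hB.2.1]
    exact Nat.mul_pos (by omega) hT
  · rw [hxl]
    exact Quotient.sound hPB

theorem Comp.finite_setOf_nonFactorizable : {x : Comp D ξ | NonFactorizable x}.Finite := by
  refine Set.Finite.of_finite_image ?_ Subtype.val_injective.injOn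
  refine ((List.finite_length_le G (Fintype.card G * Fintype.card G * totalXi D ξ)).image
    HurwitzCl.mk).subset ?_
  rintro _ ⟨x, hx, rfl⟩
  obtain ⟨l, hl⟩ := Quotient.exists_rep (x : HurwitzCl G)
  have := hx.length_le
  rw [← hl] at this
  exact ⟨l, this, hl⟩

end Components

theorem comp_finitely_generated_general
    (G : Type*) [Group G] [Fintype G]
    (D : Finset (ConjClasses G))
    (ξ : ConjClasses G → ℕ) :
    {x : ↥(Comp D ξ) | NonFactorizable x}.Finite ∧
      (∀ x : ↥(Comp D ξ), ∃ l : List ↥(Comp D ξ),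
        (∀ y ∈ l, NonFactorizable y) ∧ x = l.prod) ∧
      Monoid.FG ↥(Comp D ξ) :=
  ⟨Comp.finite_setOf_nonFactorizable, Comp.exists_list_nonFactorizable_prod,
    Monoid.fg_iff.2 ⟨_, Comp.closure_setOf_nonFactorizable, Comp.finite_setOf_nonFactorizable⟩⟩

/-- there are finitely many non-factorizable components, every component
is a product of finitely many non-factorizable components, and in particular the
monoid of components is finitely generated. -/
theorem comp_finitely_generated
    (G : Type*) [Group G] [Fintype G] [Nontrivial G]
    (D : Finset (ConjClasses G))
    (hD : ∀ c ∈ D, (1 : G) ∉ ConjClasses.carrier c)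
    (hDgen : Subgroup.closure {g : G | ConjClasses.mk g ∈ D} = ⊤)
    (ξ : ConjClasses G → ℕ) (hξ : ∀ c ∈ D, 1 ≤ ξ c) :
    {x : ↥(Comp D ξ) | NonFactorizable x}.Finite ∧
      (∀ x : ↥(Comp D ξ), ∃ l : List ↥(Comp D ξ),
        (∀ y ∈ l, NonFactorizable y) ∧ x = l.prod) ∧
      Monoid.FG ↥(Comp D ξ) :=
  comp_finitely_generated_general G D ξ
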